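/- If a plane ε of PG(5,K) (a 3-dimensional subspace of V) is external to the Klein quadric H₅, then its polar subspace π₅(ε) (which is again a plane, since B is nondegenerate) is also external to H₅. -/

import Mathlib

/-!
If a nonzero singular vector `y` lay in `π₅(ε)`, then `ε` would lie in the tangent
hyperplane `π₅(⟨y⟩)`, of dimension 5. Through `y` passes a totally singular plane `T`
of `H₅`, which also lies in `π₅(⟨y⟩)`; as `3 + 3 > 5`, `T` meets `ε` nontrivially,
contradicting externality. The dimension count `dim π₅(ε) = 6 - 3` is nondegeneracy of `B`.
-/

/-- The Klein quadratic form on `K^6`. -/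
def kleinQ {K : Type*} [Field K] (x : Fin 6 → K) : K :=
  x 0 * x 1 + x 2 * x 3 + x 4 * x 5

/-- The polar bilinear form `B(x,y) = Q(x+y) - Q(x) - Q(y)`. -/
def kleinB {K : Type*} [Field K] (x y : Fin 6 → K) : K :=
  kleinQ (x + y) - kleinQ x - kleinQ y

/-- The polar subspace `π₅(S)` of a subspace `S`. -/
def kleinPolar {K : Type*} [Field K] (S : Submodule K (Fin 6 → K)) :
    Submodule K (Fin 6 → K) where
  carrier := {y | ∀ s ∈ S, kleinB s y = 0}
  add_mem' := by
    intro a b ha hb s hs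
    have h1 := ha s hs
    have h2 := hb s hs
    simp only [kleinB, kleinQ, Pi.add_apply] at *
    linear_combination h1 + h2
  zero_mem' := by
    intro s hs
    simp [kleinB, kleinQ]
  smul_mem' := by
    intro c a ha s hs
    have h1 := ha s hs
    simp only [kleinB, kleinQ, Pi.add_apply, Pi.smul_apply, smul_eq_mul] at *
    linear_combination c * h1

/-- `τ` is a tangent hyperplane of the Klein quadric. -/
def IsTangentHyperplane {K : Type*} [Field K] (τ : Submodule K (Fin 6 → K)) : Prop :=
  ∃ x : Fin 6 → K, x ≠ 0 ∧ kleinQ x = 0 ∧ τ = kleinPolar (Submodule.span K {x})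

/-- A subspace is external to the Klein quadric. -/
def IsExternal {K : Type*} [Field K] (S : Submodule K (Fin 6 → K)) : Prop :=
  ∀ s ∈ S, s ≠ 0 → kleinQ s ≠ 0

/-- A `0`-secant of the Klein quadric: an external line. -/
def IsSecant {K : Type*} [Field K] (G : Submodule K (Fin 6 → K)) : Prop :=
  Module.finrank K G = 2 ∧ IsExternal G

/-- The pencil of lines with vertex `v` and carrier plane `κ`. -/
def pencil {K : Type*} [Field K] (v κ : Submodule K (Fin 6 → K)) :
    Set (Submodule K (Fin 6 → K)) :=
  {X | Module.finrank K X = 2 ∧ v ≤ X ∧ X ≤ κ}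

/-- An hfd line set: a set of `0`-secants such that every tangent hyperplane
contains exactly one member. -/
def IsHfd {K : Type*} [Field K] (H : Set (Submodule K (Fin 6 → K))) : Prop :=
  (∀ G ∈ H, IsSecant G) ∧
    ∀ τ : Submodule K (Fin 6 → K), IsTangentHyperplane τ → ∃! G, G ∈ H ∧ G ≤ τ

/-- A pencilled hfd line set: every member lies in a pencil entirely contained in `H`. -/
def IsPencilledHfd {K : Type*} [Field K] (H : Set (Submodule K (Fin 6 → K))) : Prop :=
  IsHfd H ∧
    ∀ G ∈ H, ∃ v κ : Submodule K (Fin 6 → K), Module.finrank K v = 1 ∧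
      Module.finrank K κ = 3 ∧ v ≤ κ ∧ pencil v κ ⊆ H ∧ G ∈ pencil v κ

/-- `v` is a vertex of the pencilled hfd line set `H`. -/
def IsVertex {K : Type*} [Field K] (H : Set (Submodule K (Fin 6 → K)))
    (v : Submodule K (Fin 6 → K)) : Prop :=
  Module.finrank K v = 1 ∧ ∃ κ : Submodule K (Fin 6 → K),
    Module.finrank K κ = 3 ∧ v ≤ κ ∧ pencil v κ ⊆ H

/-- `κ` is a carrier plane of the pencilled hfd line set `H`. -/
def IsCarrier {K : Type*} [Field K] (H : Set (Submodule K (Fin 6 → K)))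
    (κ : Submodule K (Fin 6 → K)) : Prop :=
  Module.finrank K κ = 3 ∧ ∃ v : Submodule K (Fin 6 → K),
    Module.finrank K v = 1 ∧ v ≤ κ ∧ pencil v κ ⊆ H

section HyperbolicCoordinates

variable {K ι : Type*} [Field K] [DecidableEq ι]

theorem exists_totallySingular_plane_of_hyperbolic_coords {Q : (ι → K) → K}
    {f : Fin 6 → ι} (hf : Function.Injective f)
    (hQ : ∀ x, Q x = x (f 0) * x (f 1) + x (f 2) * x (f 3) + x (f 4) * x (f 5))
    {y : ι → K} (hy : Q y = 0) (hy0 : y (f 0) ≠ 0) :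
    ∃ T : Submodule K (ι → K), Module.finrank K T = 3 ∧ y ∈ T ∧
      ∀ t ∈ T, Q t = 0 := by
  -- `Q (a • y + b • u + c • v) = a ^ 2 * Q y` for these two vectors.
  set u : ι → K := Pi.single (f 2) (y (f 0)) - Pi.single (f 1) (y (f 3))
  set v : ι → K := Pi.single (f 4) (y (f 0)) - Pi.single (f 1) (y (f 5))
  have hcoord (a b c : K) (m : Fin 6) : (a • y + b • u + c • v) (f m) =
      a * y (f m) + b * ((if m = 2 then y (f 0) else 0) - if m = 1 then y (f 3) else 0) +
        c * ((if m = 4 then y (f 0) else 0) - if m = 1 then y (f 5) else 0) := by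
    simp [u, v, Pi.single_apply, hf.eq_iff]
  have hindep : LinearIndependent K ![y, u, v] := by
    rw [Fintype.linearIndependent_iff]
    intro g hg
    simp only [Fin.sum_univ_three, Matrix.cons_val_zero, Matrix.cons_val_one,
      Matrix.cons_val_two, Matrix.head_cons, Matrix.tail_cons] at hg
    have e (m : Fin 6) := congrFun hg (f m)
    simp only [hcoord, Pi.zero_apply] at e
    have h0 : g 0 = 0 := by simpa [hy0] using e 0
    have h1 : g 1 = 0 := by simpa [h0, hy0] using e 2
    have h2 : g 2 = 0 := by simpa [h0, hy0] using e 4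
    intro m
    fin_cases m
    exacts [h0, h1, h2]
  refine ⟨Submodule.span K (Set.range ![y, u, v]), ?_, Submodule.subset_span ⟨0, rfl⟩, ?_⟩
  · rw [finrank_span_eq_card hindep, Fintype.card_fin]
  · intro t ht
    obtain ⟨c, rfl⟩ := Submodule.mem_span_range_iff_exists_fun K |>.mp ht
    rw [hQ] at hy ⊢
    simp only [Fin.sum_univ_three, Matrix.cons_val_zero, Matrix.cons_val_one,
      Matrix.cons_val_two, Matrix.head_cons, Matrix.tail_cons, hcoord]
    simp only [Fin.reduceEq, if_true, if_false]
    linear_combination c 0 ^ 2 * hy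

end HyperbolicCoordinates

section KleinQuadric

variable {K : Type*} [Field K]

def IsTotallySingular (T : Submodule K (Fin 6 → K)) : Prop :=
  ∀ t ∈ T, kleinQ t = 0

theorem kleinB_apply (x y : Fin 6 → K) :
    kleinB x y = x 0 * y 1 + x 1 * y 0 + x 2 * y 3 + x 3 * y 2 + x 4 * y 5 + x 5 * y 4 := by
  simp only [kleinB, kleinQ, Pi.add_apply]
  ring

theorem kleinB_comm (x y : Fin 6 → K) : kleinB x y = kleinB y x := by
  simp only [kleinB_apply]
  ring

theorem le_kleinPolar_comm {S T : Submodule K (Fin 6 → K)} :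
    S ≤ kleinPolar T ↔ T ≤ kleinPolar S :=
  ⟨fun h t ht s hs => kleinB_comm s t ▸ h hs t ht,
    fun h s hs t ht => kleinB_comm t s ▸ h ht s hs⟩

theorem IsTotallySingular.le_kleinPolar {S T : Submodule K (Fin 6 → K)}
    (hT : IsTotallySingular T) (hST : S ≤ T) : T ≤ kleinPolar S := fun t ht s hs => by
  rw [kleinB, hT _ (T.add_mem (hST hs) ht), hT s (hST hs), hT t ht, sub_zero, sub_zero]

theorem IsExternal.disjoint {ε T : Submodule K (Fin 6 → K)} (hε : IsExternal ε)
    (hT : IsTotallySingular T) : Disjoint T ε := by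
  rw [Submodule.disjoint_def]
  intro s hsT hsε
  by_contra hs
  exact hε s hsε hs (hT s hsT)

variable (K) in
def kleinBForm : LinearMap.BilinForm K (Fin 6 → K) :=
  LinearMap.mk₂ K kleinB
    (fun x x' y => by simp only [kleinB_apply, Pi.add_apply]; ring)
    (fun c x y => by simp only [kleinB_apply, Pi.smul_apply, smul_eq_mul]; ring)
    (fun x y y' => by simp only [kleinB_apply, Pi.add_apply]; ring)
    (fun c x y => by simp only [kleinB_apply, Pi.smul_apply, smul_eq_mul]; ring)

theorem kleinPolar_eq_orthogonal (S : Submodule K (Fin 6 → K)) :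
    kleinPolar S = (kleinBForm K).orthogonal S :=
  rfl

theorem kleinBForm_nondegenerate : (kleinBForm K).Nondegenerate := by
  refine (LinearMap.IsRefl.nondegenerate_iff_separatingLeft
    fun x y h => (kleinB_comm x y).symm.trans h).mpr fun x hx => ?_
  have hB (j : Fin 6) : kleinB x (Pi.single j 1) = 0 := hx _
  ext m
  fin_cases m
  · simpa [kleinB_apply] using hB 1
  · simpa [kleinB_apply] using hB 0
  · simpa [kleinB_apply] using hB 3
  · simpa [kleinB_apply] using hB 2
  · simpa [kleinB_apply] using hB 5
  · simpa [kleinB_apply] using hB 4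

theorem finrank_kleinPolar (S : Submodule K (Fin 6 → K)) :
    Module.finrank K (kleinPolar S) = 6 - Module.finrank K S := by
  rw [kleinPolar_eq_orthogonal,
    LinearMap.BilinForm.finrank_orthogonal kleinBForm_nondegenerate, Module.finrank_fin_fun]

theorem exists_isTotallySingular_plane {y : Fin 6 → K} (hy0 : y ≠ 0) (hy : kleinQ y = 0) :
    ∃ T : Submodule K (Fin 6 → K), Module.finrank K T = 3 ∧ y ∈ T ∧
      IsTotallySingular T := by
  obtain ⟨i, hi⟩ := Function.ne_iff.mp hy0
  fin_cases i
  · exact exists_totallySingular_plane_of_hyperbolic_coords (f := ![0, 1, 2, 3, 4, 5])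
      (by decide) (fun x => by simp [kleinQ]) hy hi
  · exact exists_totallySingular_plane_of_hyperbolic_coords (f := ![1, 0, 2, 3, 4, 5])
      (by decide) (fun x => by simp [kleinQ]; ring) hy hi
  · exact exists_totallySingular_plane_of_hyperbolic_coords (f := ![2, 3, 0, 1, 4, 5])
      (by decide) (fun x => by simp [kleinQ]; ring) hy hi
  · exact exists_totallySingular_plane_of_hyperbolic_coords (f := ![3, 2, 0, 1, 4, 5])
      (by decide) (fun x => by simp [kleinQ]; ring) hy hi
  · exact exists_totallySingular_plane_of_hyperbolic_coords (f := ![4, 5, 0, 1, 2, 3])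
      (by decide) (fun x => by simp [kleinQ]; ring) hy hi
  · exact exists_totallySingular_plane_of_hyperbolic_coords (f := ![5, 4, 0, 1, 2, 3])
      (by decide) (fun x => by simp [kleinQ]; ring) hy hi

theorem IsExternal.not_le_kleinPolar_span_singleton {ε : Submodule K (Fin 6 → K)}
    (hdim : Module.finrank K ε = 3) (hε : IsExternal ε) {y : Fin 6 → K} (hy0 : y ≠ 0)
    (hy : kleinQ y = 0) : ¬ ε ≤ kleinPolar (K ∙ y) := by
  intro hεy
  obtain ⟨T, hTdim, hyT, hT⟩ := exists_isTotallySingular_plane hy0 hy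
  have hTy : T ≤ kleinPolar (K ∙ y) :=
    hT.le_kleinPolar ((Submodule.span_singleton_le_iff_mem _ _).mpr hyT)
  have hy5 : Module.finrank K (kleinPolar (K ∙ y)) = 5 := by
    rw [finrank_kleinPolar, finrank_span_singleton hy0]
  have hsum := Submodule.finrank_sup_add_finrank_inf_eq T ε
  rw [(hε.disjoint hT).eq_bot, finrank_bot, add_zero, hTdim, hdim] at hsum
  have hle := Submodule.finrank_mono (sup_le hTy hεy)
  omega

end KleinQuadric

/-- Lemma 4.3.
The polar plane of an external plane is again a plane, and is external to the
Klein quadric. -/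
theorem polar_of_external_plane_external {K : Type*} [Field K]
    (ε : Submodule K (Fin 6 → K)) (hdim : Module.finrank K ε = 3)
    (hext : IsExternal ε) :
    Module.finrank K (kleinPolar ε) = 3 ∧ IsExternal (kleinPolar ε) := by
  refine ⟨by rw [finrank_kleinPolar, hdim], fun y hy hy0 hQy => ?_⟩
  refine hext.not_le_kleinPolar_span_singleton hdim hy0 hQy (le_kleinPolar_comm.mp ?_)
  exact (Submodule.span_singleton_le_iff_mem _ _).mpr hy
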